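/- arXiv:1810.09670 — 2 statements merged into one kernel-verified Lean document; each statement's English description precedes it below -/
import Mathlib

section
/- Let Z := min{c, e^{X_τ} − 1} − g/n. Then E_Q[Z] = c − g/n − e^{−λτ} Σ_{m=0}^∞ ( (λτ)^m / m! ) ∫_0^{1+c} Φ( (ln w − γτ − mμ) / √(σ²τ + mδ²) ) dw. -/
/-!
Since `min c (e^X - 1) = c - (1 + c - e^X)⁺` and `(1 + c - e^X)⁺` is the Lebesgue measure of
`{w ∈ (0, 1 + c] | X ≤ log w}`, Tonelli turns the expectation into `∫₀^{1+c} Q(X ≤ log w) dw`.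
On the event `{N = m}`, which is independent of `W` and the `Y j`, `X` equals
`γτ + σW + Y₀ + ⋯ + Y_{m-1}`, a Gaussian with mean `γτ + mμ` and variance `σ²τ + mδ²`; summing its
distribution function against the Poisson weights of `N` gives the series.
-/

open MeasureTheory ProbabilityTheory

noncomputable section

/-- Codomains of the combined family `(W, N, Y₀, Y₁, …)`:
the first component is the Brownian value (real), the second the Poisson count (natural),
and the remaining ones the jump amplitudes (real). -/
def JDTy : Unit ⊕ Unit ⊕ ℕ → Type
  | Sum.inl _ => ℝ
  | Sum.inr (Sum.inl _) => ℕ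
  | Sum.inr (Sum.inr _) => ℝ

instance JDTy.instMeasurableSpace : ∀ i, MeasurableSpace (JDTy i)
  | Sum.inl _ => inferInstanceAs (MeasurableSpace ℝ)
  | Sum.inr (Sum.inl _) => inferInstanceAs (MeasurableSpace ℕ)
  | Sum.inr (Sum.inr _) => inferInstanceAs (MeasurableSpace ℝ)

/-- The combined family of random variables `(W, N, Y₀, Y₁, …)`. -/
def JDFam {Ω : Type*} (W : Ω → ℝ) (N : Ω → ℕ) (Y : ℕ → Ω → ℝ) : ∀ i, Ω → JDTy i
  | Sum.inl _ => W
  | Sum.inr (Sum.inl _) => N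
  | Sum.inr (Sum.inr j) => Y j

/-- Standard normal cumulative distribution function Φ. -/
def stdNormCDF (x : ℝ) : ℝ :=
  ∫ u in Set.Iic x, (Real.sqrt (2 * Real.pi))⁻¹ * Real.exp (-u ^ 2 / 2)

open Set
open scoped ENNReal NNReal

lemma stdNormCDF_eq_cdf : stdNormCDF = cdf (gaussianReal 0 1) := by
  funext y
  rw [cdf_eq_real, measureReal_def, gaussianReal_apply_eq_integral _ one_ne_zero,
    ENNReal.toReal_ofReal (setIntegral_nonneg measurableSet_Iic
      fun _ _ => gaussianPDFReal_nonneg _ _ _)]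
  simp [stdNormCDF, gaussianPDFReal]

lemma gaussianReal_Iic (m : ℝ) {v : ℝ≥0} (hv : v ≠ 0) (x : ℝ) :
    gaussianReal m v (Iic x) = ENNReal.ofReal (stdNormCDF ((x - m) / √v)) := by
  have hsqrt : 0 < √(v : ℝ) := Real.sqrt_pos.2 (by positivity)
  have hstd : (gaussianReal m v).map (fun y => (y - m) / √v) = gaussianReal 0 1 := by
    have := (gaussianReal_div_const (gaussianReal_sub_const
      (⟨aemeasurable_id, Measure.map_id⟩ : HasLaw id (gaussianReal m v) (gaussianReal m v)) m)
      √v).map_eq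
    convert this using 2 <;> simp [hv]
  rw [stdNormCDF_eq_cdf, cdf_eq_real, ofReal_measureReal, ← hstd,
    Measure.map_apply (by fun_prop) measurableSet_Iic]
  congr 1
  ext y
  simp [div_le_div_iff_of_pos_right hsqrt]

lemma stdNormCDF_nonneg (y : ℝ) : 0 ≤ stdNormCDF y := by
  rw [stdNormCDF_eq_cdf]; exact cdf_nonneg _ y

lemma stdNormCDF_le_one (y : ℝ) : stdNormCDF y ≤ 1 := by
  rw [stdNormCDF_eq_cdf]; exact cdf_le_one _ y

@[fun_prop]
lemma measurable_stdNormCDF : Measurable stdNormCDF := by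
  rw [stdNormCDF_eq_cdf]; exact (cdf _).mono.measurable

section Independence

variable {Ω ι : Type*} {β : ι → Type*}
  {mβ : ∀ i, MeasurableSpace (β i)} {f : ∀ i, Ω → β i}

lemma measurable_iSup_comap_of_mem {S : Set ι} {i : ι} (hi : i ∈ S) :
    Measurable[⨆ j ∈ S, (mβ j).comap (f j), mβ i] (f i) :=
  Measurable.of_comap_le (le_iSup₂ (f := fun j (_ : j ∈ S) => (mβ j).comap (f j)) i hi)

lemma ProbabilityTheory.iIndepFun.indepFun_of_measurable_iSup [MeasurableSpace Ω]
    {Q : Measure Ω} (hf : iIndepFun f Q) (hf_meas : ∀ i, Measurable (f i)) {S T : Set ι}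
    (hST : Disjoint S T)
    {α α' : Type*} [MeasurableSpace α] [MeasurableSpace α'] {X : Ω → α} {X' : Ω → α'}
    (hX : Measurable[⨆ i ∈ S, (mβ i).comap (f i)] X)
    (hX' : Measurable[⨆ i ∈ T, (mβ i).comap (f i)] X') :
    IndepFun X X' Q := by
  rw [IndepFun_iff_Indep]
  exact indep_of_indep_of_le_right (indep_of_indep_of_le_left
    (indep_iSup_of_disjoint (fun i => (hf_meas i).comap_le) hf.iIndep hST) hX.comap_le)
    hX'.comap_le

end Independence

section Mixture

variable {Ω α : Type*} [MeasurableSpace Ω] [MeasurableSpace α] {Q : Measure Ω}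
  {N : Ω → ℕ} {G : ℕ → Ω → α}

lemma measurable_comp_index (hN : Measurable N) (hG : ∀ m, Measurable (G m)) :
    Measurable fun ω => G (N ω) ω :=
  (measurable_from_prod_countable_right (f := fun p : ℕ × Ω => G p.1 p.2) hG).comp
    (hN.prodMk measurable_id)

lemma measure_comp_index_mem_eq_tsum (hN : Measurable N) (hG : ∀ m, Measurable (G m))
    (hind : ∀ m, IndepFun N (G m) Q) {s : Set α} (hs : MeasurableSet s) :
    Q {ω | G (N ω) ω ∈ s} = ∑' m, Q (N ⁻¹' {m}) * Q (G m ⁻¹' s) := by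
  have hsplit : {ω | G (N ω) ω ∈ s} = ⋃ m, N ⁻¹' {m} ∩ G m ⁻¹' s := by
    ext ω
    simp
  rw [hsplit, measure_iUnion]
  · exact tsum_congr fun m =>
      (hind m).measure_inter_preimage_eq_mul _ _ (measurableSet_singleton m) hs
  · intro m m' hmm'
    exact Disjoint.mono inter_subset_left inter_subset_left
      ((disjoint_singleton.2 hmm').preimage N)
  · exact fun m => (hN (measurableSet_singleton m)).inter (hG m hs)

end Mixture

section JumpDiffusion

variable {Ω : Type*} {γ μ σ δ tau : ℝ} {W : Ω → ℝ} {N : Ω → ℕ} {Y : ℕ → Ω → ℝ}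

/-- `X_τ` on the event `{N = m}`. -/
def valueGivenJumps (γ σ tau : ℝ) (W : Ω → ℝ) (Y : ℕ → Ω → ℝ) (m : ℕ) (ω : Ω) : ℝ :=
  γ * tau + σ * W ω + ∑ j ∈ Finset.range m, Y j ω

lemma valueGivenJumps_zero : valueGivenJumps γ σ tau W Y 0 = fun ω => γ * tau + σ * W ω := by
  funext ω
  simp [valueGivenJumps]

lemma valueGivenJumps_succ (m : ℕ) :
    valueGivenJumps γ σ tau W Y (m + 1) = valueGivenJumps γ σ tau W Y m + Y m := by
  funext ω
  simp only [valueGivenJumps, Finset.sum_range_succ, Pi.add_apply]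
  ring

lemma measurable_valueGivenJumps_iSup {T : Set (Unit ⊕ Unit ⊕ ℕ)} {m : ℕ}
    (hW : Sum.inl () ∈ T) (hY : ∀ j < m, Sum.inr (Sum.inr j) ∈ T) :
    Measurable[⨆ i ∈ T, (JDTy.instMeasurableSpace i).comap (JDFam W N Y i)]
      (valueGivenJumps γ σ tau W Y m) := by
  set 𝓕 := ⨆ i ∈ T, (JDTy.instMeasurableSpace i).comap (JDFam W N Y i)
  have hW' : Measurable[𝓕] W := measurable_iSup_comap_of_mem (f := JDFam W N Y) hW
  have hY' : ∀ j < m, Measurable[𝓕] (Y j) := fun j hj =>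
    measurable_iSup_comap_of_mem (f := JDFam W N Y) (hY j hj)
  exact ((hW'.const_mul σ).const_add _).add
    (Finset.measurable_sum _ fun j hj => hY' j (Finset.mem_range.1 hj))

variable [MeasurableSpace Ω] {Q : Measure Ω}

lemma measurable_valueGivenJumps (hW : Measurable W) (hY : ∀ j, Measurable (Y j)) (m : ℕ) :
    Measurable (valueGivenJumps γ σ tau W Y m) :=
  ((hW.const_mul σ).const_add _).add (Finset.measurable_sum _ fun j _ => hY j)

lemma measurable_JDFam (hW : Measurable W) (hN : Measurable N) (hY : ∀ j, Measurable (Y j)) :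
    ∀ i, Measurable (JDFam W N Y i)
  | Sum.inl _ => hW
  | Sum.inr (Sum.inl _) => hN
  | Sum.inr (Sum.inr j) => hY j

lemma indepFun_count_valueGivenJumps (hIndep : iIndepFun (JDFam W N Y) Q)
    (hW : Measurable W) (hN : Measurable N) (hY : ∀ j, Measurable (Y j)) (m : ℕ) :
    IndepFun N (valueGivenJumps γ σ tau W Y m) Q :=
  hIndep.indepFun_of_measurable_iSup (measurable_JDFam hW hN hY) disjoint_compl_right
    (measurable_iSup_comap_of_mem (f := JDFam W N Y) (mem_singleton (Sum.inr (Sum.inl ()))))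
    (measurable_valueGivenJumps_iSup (by simp) (by simp))

lemma indepFun_valueGivenJumps_jump (hIndep : iIndepFun (JDFam W N Y) Q)
    (hW : Measurable W) (hN : Measurable N) (hY : ∀ j, Measurable (Y j)) (m : ℕ) :
    IndepFun (valueGivenJumps γ σ tau W Y m) (Y m) Q :=
  hIndep.indepFun_of_measurable_iSup (measurable_JDFam hW hN hY) disjoint_compl_left
    (measurable_valueGivenJumps_iSup (by simp) (by simp; omega))
    (measurable_iSup_comap_of_mem (f := JDFam W N Y) (mem_singleton (Sum.inr (Sum.inr m))))

lemma map_valueGivenJumps (hIndep : iIndepFun (JDFam W N Y) Q)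
    (hW : Measurable W) (hN : Measurable N) (hY : ∀ j, Measurable (Y j))
    (hW_law : Q.map W = gaussianReal 0 tau.toNNReal)
    (hY_law : ∀ j, Q.map (Y j) = gaussianReal μ (δ ^ 2).toNNReal) (htau : 0 ≤ tau) (m : ℕ) :
    Q.map (valueGivenJumps γ σ tau W Y m)
      = gaussianReal (γ * tau + m * μ) (σ ^ 2 * tau + m * δ ^ 2).toNNReal := by
  induction m with
  | zero =>
    rw [valueGivenJumps_zero, (gaussianReal_const_add
      (gaussianReal_const_mul ⟨hW.aemeasurable, hW_law⟩ σ) (γ * tau)).map_eq]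
    congr 1
    · simp
    · rw [← NNReal.coe_inj]; simp [htau, mul_nonneg (sq_nonneg σ) htau]
  | succ m ih =>
    rw [valueGivenJumps_succ, gaussianReal_add_gaussianReal_of_indepFun
      (indepFun_valueGivenJumps_jump hIndep hW hN hY m) ih (hY_law m)]
    congr 1
    · push_cast; ring
    · rw [← Real.toNNReal_add (by positivity) (sq_nonneg δ)]
      push_cast
      ring_nf

end JumpDiffusion

lemma lintegral_ofReal_sub_eq_setLIntegral_measure_le {Ω : Type*} [MeasurableSpace Ω]
    {Q : Measure Ω} [SFinite Q] {V : Ω → ℝ} (hV : Measurable V) (hV_pos : ∀ ω, 0 < V ω)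
    (a : ℝ) :
    ∫⁻ ω, ENNReal.ofReal (a - V ω) ∂Q = ∫⁻ w in Ioc 0 a, Q {ω | V ω ≤ w} := by
  set E : Set (Ω × ℝ) := {p | V p.1 ≤ p.2}
  have hE : MeasurableSet E := measurableSet_le (hV.comp measurable_fst) measurable_snd
  calc ∫⁻ ω, ENNReal.ofReal (a - V ω) ∂Q
      = ∫⁻ ω, volume.restrict (Ioc 0 a) (Prod.mk ω ⁻¹' E) ∂Q := by
        refine lintegral_congr fun ω => ?_
        have hslice : Prod.mk ω ⁻¹' E ∩ Ioc 0 a = Icc (V ω) a := by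
          ext w
          simp only [E, mem_inter_iff, mem_preimage, mem_ofPred_eq, mem_Ioc, mem_Icc]
          grind [hV_pos ω]
        rw [Measure.restrict_apply (measurable_prodMk_left hE), hslice, Real.volume_Icc]
    _ = Q.prod (volume.restrict (Ioc 0 a)) E := (Measure.prod_apply hE).symm
    _ = ∫⁻ w in Ioc 0 a, Q {ω | V ω ≤ w} := Measure.prod_apply_symm hE

section Expectation

variable {Ω : Type*} [MeasurableSpace Ω] {Q : Measure Ω}
  {γ μ σ δ tau : ℝ} {r : ℝ≥0} {W : Ω → ℝ} {N : Ω → ℕ} {Y : ℕ → Ω → ℝ}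

lemma measure_valueGivenJumps_preimage_Iic (hIndep : iIndepFun (JDFam W N Y) Q)
    (hW : Measurable W) (hN : Measurable N) (hY : ∀ j, Measurable (Y j))
    (hW_law : Q.map W = gaussianReal 0 tau.toNNReal)
    (hY_law : ∀ j, Q.map (Y j) = gaussianReal μ (δ ^ 2).toNNReal)
    (hσ : σ ≠ 0) (htau : 0 < tau) (m : ℕ) (x : ℝ) :
    Q (valueGivenJumps γ σ tau W Y m ⁻¹' Iic x)
      = ENNReal.ofReal (stdNormCDF ((x - γ * tau - m * μ) / √(σ ^ 2 * tau + m * δ ^ 2))) := by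
  have hvar : 0 < σ ^ 2 * tau + m * δ ^ 2 := by positivity
  rw [← Measure.map_apply (measurable_valueGivenJumps hW hY m) measurableSet_Iic,
    map_valueGivenJumps hIndep hW hN hY hW_law hY_law htau.le,
    gaussianReal_Iic _ (by simpa using hvar), Real.coe_toNNReal _ hvar.le, sub_sub]

lemma measure_valueGivenJumps_count_mem_Iic (hIndep : iIndepFun (JDFam W N Y) Q)
    (hW : Measurable W) (hN : Measurable N) (hY : ∀ j, Measurable (Y j))
    (hW_law : Q.map W = gaussianReal 0 tau.toNNReal) (hN_law : Q.map N = poissonMeasure r)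
    (hY_law : ∀ j, Q.map (Y j) = gaussianReal μ (δ ^ 2).toNNReal)
    (hσ : σ ≠ 0) (htau : 0 < tau) (x : ℝ) :
    Q {ω | valueGivenJumps γ σ tau W Y (N ω) ω ∈ Iic x}
      = ∑' m : ℕ, ENNReal.ofReal (Real.exp (-r) * r ^ m / m.factorial)
          * ENNReal.ofReal (stdNormCDF ((x - γ * tau - m * μ) / √(σ ^ 2 * tau + m * δ ^ 2))) := by
  rw [measure_comp_index_mem_eq_tsum hN (measurable_valueGivenJumps hW hY)
    (indepFun_count_valueGivenJumps hIndep hW hN hY) measurableSet_Iic]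
  refine tsum_congr fun m => ?_
  rw [← Measure.map_apply hN (measurableSet_singleton m), hN_law, poissonMeasure_singleton,
    measure_valueGivenJumps_preimage_Iic hIndep hW hN hY hW_law hY_law hσ htau]

lemma lintegral_ofReal_sub_exp_valueGivenJumps [IsProbabilityMeasure Q]
    (hIndep : iIndepFun (JDFam W N Y) Q)
    (hW : Measurable W) (hN : Measurable N) (hY : ∀ j, Measurable (Y j))
    (hW_law : Q.map W = gaussianReal 0 tau.toNNReal) (hN_law : Q.map N = poissonMeasure r)
    (hY_law : ∀ j, Q.map (Y j) = gaussianReal μ (δ ^ 2).toNNReal)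
    (hσ : σ ≠ 0) (htau : 0 < tau) (a : ℝ) :
    ∫⁻ ω, ENNReal.ofReal (a - Real.exp (valueGivenJumps γ σ tau W Y (N ω) ω)) ∂Q
      = ∑' m : ℕ, ∫⁻ w in Ioc 0 a, ENNReal.ofReal (Real.exp (-r) * r ^ m / m.factorial)
          * ENNReal.ofReal
              (stdNormCDF ((Real.log w - γ * tau - m * μ) / √(σ ^ 2 * tau + m * δ ^ 2))) := by
  have hX : Measurable fun ω => valueGivenJumps γ σ tau W Y (N ω) ω :=
    measurable_comp_index hN (measurable_valueGivenJumps hW hY)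
  rw [lintegral_ofReal_sub_eq_setLIntegral_measure_le (by fun_prop) (fun ω => by positivity) a]
  refine (setLIntegral_congr_fun measurableSet_Ioc fun w hw => ?_).trans
    (lintegral_tsum fun m => by fun_prop)
  simp_rw [← measure_valueGivenJumps_count_mem_Iic hIndep hW hN hY hW_law hN_law hY_law hσ htau,
    mem_Iic, Real.le_log_iff_exp_le hw.1]

lemma integral_max_zero_sub_exp_valueGivenJumps [IsProbabilityMeasure Q]
    (hIndep : iIndepFun (JDFam W N Y) Q)
    (hW : Measurable W) (hN : Measurable N) (hY : ∀ j, Measurable (Y j))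
    (hW_law : Q.map W = gaussianReal 0 tau.toNNReal) (hN_law : Q.map N = poissonMeasure r)
    (hY_law : ∀ j, Q.map (Y j) = gaussianReal μ (δ ^ 2).toNNReal)
    (hσ : σ ≠ 0) (htau : 0 < tau) (a : ℝ) :
    ∫ ω, max 0 (a - Real.exp (valueGivenJumps γ σ tau W Y (N ω) ω)) ∂Q
      = ∑' m : ℕ, Real.exp (-r) * r ^ m / m.factorial * ∫ w in Ioc 0 a,
          stdNormCDF ((Real.log w - γ * tau - m * μ) / √(σ ^ 2 * tau + m * δ ^ 2)) := by
  have hX : Measurable fun ω => valueGivenJumps γ σ tau W Y (N ω) ω :=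
    measurable_comp_index hN (measurable_valueGivenJumps hW hY)
  have hΦ_int (m : ℕ) : IntegrableOn (fun w : ℝ =>
      stdNormCDF ((Real.log w - γ * tau - m * μ) / √(σ ^ 2 * tau + m * δ ^ 2))) (Ioc 0 a) :=
    Measure.integrableOn_of_bounded (M := 1) measure_Ioc_lt_top.ne
      (Measurable.aestronglyMeasurable (by fun_prop))
      (ae_of_all _ fun w => by
        rw [Real.norm_of_nonneg (stdNormCDF_nonneg _)]; exact stdNormCDF_le_one _)
  rw [integral_eq_lintegral_of_nonneg_ae
    (f := fun ω => max 0 (a - Real.exp (valueGivenJumps γ σ tau W Y (N ω) ω)))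
    (ae_of_all _ fun ω => le_max_left _ _)
    (measurable_const.max (hX.exp.const_sub a)).aestronglyMeasurable]
  simp only [ENNReal.ofReal_max, ENNReal.ofReal_zero, zero_max]
  rw [lintegral_ofReal_sub_exp_valueGivenJumps hIndep hW hN hY hW_law hN_law hY_law hσ htau,
    ENNReal.tsum_toReal_eq fun m => ?_]
  · refine tsum_congr fun m => ?_
    rw [lintegral_const_mul _ (by fun_prop), ENNReal.toReal_mul, ENNReal.toReal_ofReal
      (by positivity), ← integral_eq_lintegral_of_nonneg_ae
      (ae_of_all _ fun w => stdNormCDF_nonneg _) (hΦ_int m).aestronglyMeasurable]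
  · rw [lintegral_const_mul _ (by fun_prop)]
    exact ENNReal.mul_ne_top ENNReal.ofReal_ne_top (hΦ_int m).lintegral_lt_top.ne

lemma integral_min_exp_sub_one_valueGivenJumps [IsProbabilityMeasure Q]
    (hIndep : iIndepFun (JDFam W N Y) Q)
    (hW : Measurable W) (hN : Measurable N) (hY : ∀ j, Measurable (Y j))
    (hW_law : Q.map W = gaussianReal 0 tau.toNNReal) (hN_law : Q.map N = poissonMeasure r)
    (hY_law : ∀ j, Q.map (Y j) = gaussianReal μ (δ ^ 2).toNNReal)
    (hσ : σ ≠ 0) (htau : 0 < tau) (c b : ℝ) :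
    ∫ ω, (min c (Real.exp (valueGivenJumps γ σ tau W Y (N ω) ω) - 1) - b) ∂Q
      = c - b - ∑' m : ℕ, Real.exp (-r) * r ^ m / m.factorial * ∫ w in Ioc 0 (1 + c),
          stdNormCDF ((Real.log w - γ * tau - m * μ) / √(σ ^ 2 * tau + m * δ ^ 2)) := by
  have hX : Measurable fun ω => valueGivenJumps γ σ tau W Y (N ω) ω :=
    measurable_comp_index hN (measurable_valueGivenJumps hW hY)
  have hint : Integrable
      (fun ω => max 0 (1 + c - Real.exp (valueGivenJumps γ σ tau W Y (N ω) ω))) Q :=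
    Integrable.of_bound (measurable_const.max (hX.exp.const_sub _)).aestronglyMeasurable |1 + c|
      (ae_of_all _ fun ω => by
        rw [Real.norm_of_nonneg (le_max_left _ _)]
        exact max_le (abs_nonneg _) ((sub_le_self _ (Real.exp_pos _).le).trans (le_abs_self _)))
  have hmin (t : ℝ) : min c (t - 1) - b = c - b - max 0 (1 + c - t) := by grind
  simp_rw [hmin]
  rw [integral_sub (integrable_const _) hint, integral_const, probReal_univ, one_smul,
    integral_max_zero_sub_exp_valueGivenJumps hIndep hW hN hY hW_law hN_law hY_law hσ htau]

end Expectation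

lemma JDFam_ae_eq {Ω : Type*} [MeasurableSpace Ω] {Q : Measure Ω} {W W' : Ω → ℝ}
    {N N' : Ω → ℕ} {Y Y' : ℕ → Ω → ℝ} (hW : W =ᵐ[Q] W') (hN : N =ᵐ[Q] N')
    (hY : ∀ j, Y j =ᵐ[Q] Y' j) : ∀ i, JDFam W N Y i =ᵐ[Q] JDFam W' N' Y' i
  | Sum.inl _ => hW
  | Sum.inr (Sum.inl _) => hN
  | Sum.inr (Sum.inr j) => hY j

lemma integral_min_exp_sub_one_valueGivenJumps_of_law {Ω : Type*} [MeasurableSpace Ω]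
    {Q : Measure Ω} [IsProbabilityMeasure Q] {γ μ σ δ tau : ℝ} {r : ℝ≥0} {W : Ω → ℝ}
    {N : Ω → ℕ} {Y : ℕ → Ω → ℝ} (hIndep : iIndepFun (JDFam W N Y) Q)
    (hW_law : Q.map W = gaussianReal 0 tau.toNNReal) (hN_law : Q.map N = poissonMeasure r)
    (hY_law : ∀ j, Q.map (Y j) = gaussianReal μ (δ ^ 2).toNNReal)
    (hσ : σ ≠ 0) (htau : 0 < tau) (c b : ℝ) :
    ∫ ω, (min c (Real.exp (valueGivenJumps γ σ tau W Y (N ω) ω) - 1) - b) ∂Q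
      = c - b - ∑' m : ℕ, Real.exp (-r) * r ^ m / m.factorial * ∫ w in Ioc 0 (1 + c),
          stdNormCDF ((Real.log w - γ * tau - m * μ) / √(σ ^ 2 * tau + m * δ ^ 2)) := by
  -- The laws make `W`, `N` and the `Y j` a.e.-measurable; pass to measurable versions.
  have hW : AEMeasurable W Q := aemeasurable_of_map_neZero (by rw [hW_law]; infer_instance)
  have hN : AEMeasurable N Q := aemeasurable_of_map_neZero (by rw [hN_law]; infer_instance)
  have hY (j : ℕ) : AEMeasurable (Y j) Q :=
    aemeasurable_of_map_neZero (by rw [hY_law j]; infer_instance)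
  have hYY' : ∀ᵐ ω ∂Q, ∀ j, Y j ω = (hY j).mk (Y j) ω := ae_all_iff.2 fun j => (hY j).ae_eq_mk
  rw [← integral_min_exp_sub_one_valueGivenJumps
    (hIndep.congr (JDFam_ae_eq hW.ae_eq_mk hN.ae_eq_mk fun j => (hY j).ae_eq_mk))
    hW.measurable_mk hN.measurable_mk (fun j => (hY j).measurable_mk)
    (by rwa [← Measure.map_congr hW.ae_eq_mk]) (by rwa [← Measure.map_congr hN.ae_eq_mk])
    (fun j => by rw [← Measure.map_congr (hY j).ae_eq_mk, hY_law]) hσ htau c b]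
  refine integral_congr_ae ?_
  filter_upwards [hW.ae_eq_mk, hN.ae_eq_mk, hYY'] with ω hWω hNω hYω
  simp only [valueGivenJumps, hWω, hNω, hYω]

theorem stmt11_general
    {Ω : Type*} [MeasurableSpace Ω] (Q : Measure Ω) [IsProbabilityMeasure Q]
    (γ μ σ δ lam tau : ℝ) (hσ : 0 < σ) (hlam : 0 < lam) (htau : 0 < tau)
    (W : Ω → ℝ) (N : Ω → ℕ) (Y : ℕ → Ω → ℝ)
    (hW : Measure.map W Q = gaussianReal 0 (tau).toNNReal)
    (hN : Measure.map N Q = poissonMeasure (lam * tau).toNNReal)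
    (hY : ∀ j, Measure.map (Y j) Q = gaussianReal μ (δ ^ 2).toNNReal)
    (hIndep : iIndepFun (m := JDTy.instMeasurableSpace) (JDFam W N Y) Q)
    (X : Ω → ℝ) (hX : ∀ ω, X ω = γ * tau + σ * W ω + ∑ j ∈ Finset.range (N ω), Y j ω)
    (c g : ℝ) (n : ℕ)
    (Z : Ω → ℝ) (hZ : ∀ ω, Z ω = min c (Real.exp (X ω) - 1) - g / n)
    : ∫ ω, Z ω ∂Q
      = c - g / n - Real.exp (-(lam * tau)) * ∑' m : ℕ,
          (lam * tau) ^ m / (m.factorial : ℝ) *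
            ∫ w in Set.Ioc (0 : ℝ) (1 + c),
              stdNormCDF ((Real.log w - γ * tau - m * μ) / Real.sqrt (σ ^ 2 * tau + m * δ ^ 2)) := by
  have hZ' : Z = fun ω => min c (Real.exp (valueGivenJumps γ σ tau W Y (N ω) ω) - 1) - g / n := by
    funext ω
    rw [hZ, hX, valueGivenJumps]
  rw [hZ', integral_min_exp_sub_one_valueGivenJumps_of_law hIndep hW hN hY hσ.ne' htau,
    Real.coe_toNNReal _ (by positivity), ← tsum_mul_left]
  simp_rw [mul_div_assoc, mul_assoc]

/-- first moment of `Z = min(c, exp (X τ) - 1) - g/n`. -/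
theorem stmt11
    {Ω : Type*} [MeasurableSpace Ω] (Q : Measure Ω) [IsProbabilityMeasure Q]
    (γ μ σ δ lam tau : ℝ) (hσ : 0 < σ) (hδ : 0 < δ) (hlam : 0 < lam) (htau : 0 < tau)
    (W : Ω → ℝ) (N : Ω → ℕ) (Y : ℕ → Ω → ℝ)
    (hW : Measure.map W Q = gaussianReal 0 (tau).toNNReal)
    (hN : Measure.map N Q = poissonMeasure (lam * tau).toNNReal)
    (hY : ∀ j, Measure.map (Y j) Q = gaussianReal μ (δ ^ 2).toNNReal)
    (hIndep : iIndepFun (m := JDTy.instMeasurableSpace) (JDFam W N Y) Q)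
    (X : Ω → ℝ) (hX : ∀ ω, X ω = γ * tau + σ * W ω + ∑ j ∈ Finset.range (N ω), Y j ω)
    (c g : ℝ) (hc : 0 ≤ c) (n : ℕ) (hn : 1 ≤ n)
    (Z : Ω → ℝ) (hZ : ∀ ω, Z ω = min c (Real.exp (X ω) - 1) - g / n)
    : ∫ ω, Z ω ∂Q
      = c - g / n - Real.exp (-(lam * tau)) * ∑' m : ℕ,
          (lam * tau) ^ m / (m.factorial : ℝ) *
            ∫ w in Set.Ioc (0 : ℝ) (1 + c),
              stdNormCDF ((Real.log w - γ * tau - m * μ) / Real.sqrt (σ ^ 2 * tau + m * δ ^ 2)) :=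
  stmt11_general Q γ μ σ δ lam tau hσ hlam htau W N Y hW hN hY hIndep X hX c g n Z hZ
end
end

section
/- Let Z := min{c, e^{X_τ} − 1} − g/n. Then E_Q[Z] = c − g/n + e^{−λτ} Σ_{m=0}^∞ ( (λτ)^m / m! ) [ exp{ (γ + σ²/2)τ + (μ + δ²/2)m } · Φ(κ₁^m) − (1+c) Φ(κ₂^m) ], where κ₁^m := ( ln(1+c) − γτ − mμ − σ²τ − mδ² ) / √(σ²τ + mδ²) and κ₂^m := ( ln(1+c) − γτ − mμ ) / √(σ²τ + mδ²). -/
/-!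
Conditionally on `N = m`, the exponent `X_τ - γτ = σW + ∑_{j<m} Y_j` is Gaussian with mean `mμ`
and variance `σ²τ + mδ²`, and it is independent of the event `{N = m}`; hence `E[Z]` is the
Poisson mixture of Gaussian expectations. For a Gaussian `G ~ N(a, v)`,
`min(c, e^G - 1) = c - (1 + c - e^G) 1_{G ≤ log(1+c)}`, and the exponential tilt
`e^x φ_{a,v}(x) = e^{a+v/2} φ_{a+v,v}(x)` turns the truncated mean of `e^G` into a value of `Φ`.
-/

open MeasureTheory ProbabilityTheory

noncomputable section

open Real Set
open scoped NNReal

section RandomIndex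

variable {Ω : Type*} [MeasurableSpace Ω] {μ : Measure Ω} {N : Ω → ℕ} {F : ℕ → Ω → ℝ}

lemma ProbabilityTheory.IndepFun.setIntegral_preimage_singleton {G : Ω → ℝ}
    (hN : AEMeasurable N μ) (hG : AEStronglyMeasurable G μ) (hind : IndepFun N G μ) (m : ℕ) :
    ∫ ω in N ⁻¹' {m}, G ω ∂μ = μ.real (N ⁻¹' {m}) * ∫ ω, G ω ∂μ := by
  have hfib : NullMeasurableSet (N ⁻¹' {m}) μ := hN.nullMeasurable (measurableSet_singleton m)
  have hone : IndepFun (({m} : Set ℕ).indicator (1 : ℕ → ℝ) ∘ N) G μ :=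
    hind.comp (measurable_one.indicator (measurableSet_singleton m)) measurable_id
  have hprob : ∫ ω, (({m} : Set ℕ).indicator (1 : ℕ → ℝ) ∘ N) ω ∂μ = μ.real (N ⁻¹' {m}) := by
    change ∫ ω, (N ⁻¹' {m}).indicator 1 ω ∂μ = _
    rw [integral_indicator₀ hfib, Pi.one_def, setIntegral_const, smul_eq_mul, mul_one]
  rw [← hprob, ← hone.integral_fun_mul_eq_mul_integral _ hG, ← integral_indicator₀ hfib]
  · congr 1 with ω
    by_cases hω : N ω = m <;> simp [indicator, hω]
  · exact ((aemeasurable_indicator_const_iff 1).2 hfib).aestronglyMeasurable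

lemma aestronglyMeasurable_comp_index (hN : AEMeasurable N μ)
    (hF : ∀ m, AEStronglyMeasurable (F m) μ) : AEStronglyMeasurable (fun ω => F (N ω) ω) μ := by
  rw [← Measure.restrict_univ (μ := μ), ← preimage_univ (f := N), ← iUnion_of_singleton,
    preimage_iUnion]
  refine AEStronglyMeasurable.iUnion fun m => (hF m).restrict.congr ?_
  refine (ae_restrict_iff'₀ (hN.nullMeasurable (measurableSet_singleton m))).2 ?_
  exact Filter.Eventually.of_forall fun ω (hω : N ω = m) => by simp only [hω]

theorem hasSum_integral_comp_index (hN : AEMeasurable N μ)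
    (hF : ∀ m, AEStronglyMeasurable (F m) μ) (hind : ∀ m, IndepFun N (F m) μ)
    (hint : Integrable (fun ω => F (N ω) ω) μ) :
    HasSum (fun m => μ.real (N ⁻¹' {m}) * ∫ ω, F m ω ∂μ) (∫ ω, F (N ω) ω ∂μ) := by
  have hfib : ∀ m, NullMeasurableSet (N ⁻¹' {m}) μ :=
    fun m => hN.nullMeasurable (measurableSet_singleton m)
  have hsum := hasSum_integral_iUnion_ae hfib
    ((pairwise_disjoint_fiber N).mono fun _ _ h => h.aedisjoint) hint.integrableOn
  rw [← preimage_iUnion, iUnion_of_singleton, preimage_univ, Measure.restrict_univ] at hsum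
  refine hsum.congr_fun fun m => ?_
  rw [setIntegral_congr_fun₀ (hfib m) (g := F m) fun ω hω => by rw [show N ω = m from hω],
    (hind m).setIntegral_preimage_singleton hN (hF m)]

end RandomIndex

lemma ProbabilityTheory.iIndepFun.indepFun_finsetSum_comp_of_notMem {Ω ι : Type*}
    {β : ι → Type*} [∀ i, MeasurableSpace (β i)] [MeasurableSpace Ω] {Q : Measure Ω}
    {f : ∀ i, Ω → β i} (hf : iIndepFun f Q) (hmeas : ∀ i, AEMeasurable (f i) Q)
    {g : ∀ i, β i → ℝ} (hg : ∀ i, Measurable (g i)) {S : Finset ι} {k : ι} (hk : k ∉ S) :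
    IndepFun (fun ω => ∑ i ∈ S, g i (f i ω)) (f k) Q := by
  have h := (hf.indepFun_finset₀ S {k} (Finset.disjoint_singleton_right.2 hk) hmeas).comp
    (φ := fun x => ∑ i : S, g i (x i))
    (ψ := fun x => (x ⟨k, Finset.mem_singleton_self k⟩ : β k)) (_mγ' := inferInstance)
    (Finset.measurable_sum (f := fun (i : S) (x : ∀ j : S, β j) => g i (x i)) _
      fun i _ => (hg i).comp (measurable_pi_apply i))
    (measurable_pi_apply (⟨k, Finset.mem_singleton_self k⟩ : ({k} : Finset ι)))
  convert h using 1
  · funext ω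
    exact (Finset.sum_coe_sort S fun i => g i (f i ω)).symm
  · rfl

lemma stdNormCDF_eq_gaussianReal_real_Iic (x : ℝ) :
    stdNormCDF x = (gaussianReal 0 1).real (Iic x) := by
  rw [measureReal_def, gaussianReal_apply_eq_integral 0 one_ne_zero,
    ENNReal.toReal_ofReal
      (setIntegral_nonneg measurableSet_Iic fun u _ => gaussianPDFReal_nonneg 0 1 u)]
  simp [stdNormCDF, gaussianPDFReal]

lemma gaussianReal_real_Iic (a : ℝ) {v : ℝ≥0} (hv : v ≠ 0) (x : ℝ) :
    (gaussianReal a v).real (Iic x) = stdNormCDF ((x - a) / √v) := by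
  have hs : 0 < √(v : ℝ) := sqrt_pos.2 (NNReal.coe_pos.2 (pos_iff_ne_zero.2 hv))
  have hstd : (gaussianReal a v).map (fun z => (z - a) / √v) = gaussianReal 0 1 := by
    rw [show (fun z => (z - a) / √v) = (· / √v) ∘ (· - a) from rfl,
      ← Measure.map_map (by fun_prop) (by fun_prop), gaussianReal_map_sub_const,
      gaussianReal_map_div_const, sub_self, zero_div]
    congr
    ext
    simp [sq_sqrt v.coe_nonneg, hv]
  rw [stdNormCDF_eq_gaussianReal_real_Iic, ← hstd,
    map_measureReal_apply (by fun_prop) measurableSet_Iic]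
  congr 1
  ext z
  simp [div_le_div_iff_of_pos_right hs]

lemma gaussianReal_real_eq_setIntegral (a : ℝ) {v : ℝ≥0} (hv : v ≠ 0) (s : Set ℝ) :
    (gaussianReal a v).real s = ∫ x in s, gaussianPDFReal a v x := by
  rw [measureReal_def, gaussianReal_apply_eq_integral a hv,
    ENNReal.toReal_ofReal (integral_nonneg fun u => gaussianPDFReal_nonneg a v u)]

lemma gaussianPDFReal_mul_exp (a : ℝ) (v : ℝ≥0) (z : ℝ) :
    gaussianPDFReal a v z * exp z = exp (a + v / 2) * gaussianPDFReal (a + v) v z := by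
  by_cases hv : v = 0
  · simp [hv, gaussianPDFReal_zero_var]
  have hv' : (v : ℝ) ≠ 0 := by exact_mod_cast hv
  simp only [gaussianPDFReal_def]
  rw [mul_left_comm, mul_assoc, ← exp_add, ← exp_add]
  congr 2
  field_simp
  ring

lemma setIntegral_exp_gaussianReal (a : ℝ) {v : ℝ≥0} (hv : v ≠ 0) {s : Set ℝ}
    (hs : MeasurableSet s) :
    ∫ z in s, exp z ∂gaussianReal a v = exp (a + v / 2) * (gaussianReal (a + v) v).real s := by
  rw [← integral_indicator hs, integral_gaussianReal_eq_integral_smul hv,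
    gaussianReal_real_eq_setIntegral _ hv, ← integral_const_mul, ← integral_indicator hs]
  congr 1 with z
  by_cases hz : z ∈ s <;> simp [hz, gaussianPDFReal_mul_exp]

lemma min_sub_one_eq_sub_indicator {c : ℝ} (hc : -1 < c) (z : ℝ) :
    min c (exp z - 1) = c - (Iic (log (1 + c))).indicator (fun z => 1 + c - exp z) z := by
  have hc' : 0 < 1 + c := by linarith
  by_cases hz : z ≤ log (1 + c)
  · have : exp z ≤ 1 + c := by rwa [← le_log_iff_exp_le hc']
    rw [indicator_of_mem (show z ∈ Iic _ from hz), min_eq_right (by linarith)]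
    ring
  · have : 1 + c < exp z := by rwa [← log_lt_iff_lt_exp hc', ← not_le]
    rw [indicator_of_notMem (show z ∉ Iic _ from hz), min_eq_left (by linarith), sub_zero]

lemma abs_min_exp_sub_one_le {c : ℝ} (hc : 0 ≤ c) (x : ℝ) : |min c (exp x - 1)| ≤ c + 1 :=
  abs_le.2 ⟨le_min (by linarith) (by linarith [exp_pos x]), (min_le_left _ _).trans (by linarith)⟩

theorem integral_min_exp_sub_one_gaussianReal (a : ℝ) {v : ℝ≥0} (hv : v ≠ 0) {c : ℝ}
    (hc : -1 < c) :
    ∫ z, min c (exp z - 1) ∂gaussianReal a v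
      = c - (1 + c) * stdNormCDF ((log (1 + c) - a) / √v)
        + exp (a + v / 2) * stdNormCDF ((log (1 + c) - a - v) / √v) := by
  have hexp : Integrable exp (gaussianReal a v) := by
    simpa using integrable_exp_mul_gaussianReal (μ := a) (v := v) 1
  have hint : Integrable ((Iic (log (1 + c))).indicator fun z => 1 + c - exp z)
      (gaussianReal a v) :=
    ((integrable_const _).sub hexp).indicator measurableSet_Iic
  simp_rw [min_sub_one_eq_sub_indicator hc]
  rw [integral_sub (integrable_const c) hint,
    integral_const, probReal_univ, one_smul, integral_indicator measurableSet_Iic,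
    integral_sub (integrable_const _).integrableOn hexp.integrableOn, setIntegral_const,
    smul_eq_mul, setIntegral_exp_gaussianReal a hv measurableSet_Iic, gaussianReal_real_Iic a hv,
    gaussianReal_real_Iic _ hv, sub_add_eq_sub_sub]
  ring

theorem integral_min_exp_add_sub_one_gaussianReal {c : ℝ} (hc : -1 < c) (b a : ℝ) {v : ℝ}
    (hv : 0 < v) :
    ∫ x, min c (exp (b + x) - 1) ∂gaussianReal a v.toNNReal
      = c - (1 + c) * stdNormCDF ((log (1 + c) - b - a) / √v)
        + exp (b + a + v / 2) * stdNormCDF ((log (1 + c) - b - a - v) / √v) := by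
  have hf : Continuous fun z => min c (exp z - 1) := by fun_prop
  rw [← integral_map (f := fun z => min c (exp z - 1)) (by fun_prop) hf.aestronglyMeasurable,
    gaussianReal_map_const_add, integral_min_exp_sub_one_gaussianReal _ (by simpa using hv) hc,
    Real.coe_toNNReal _ hv.le]
  ring_nf

/-- The weight of the `N`-coordinate is irrelevant: that coordinate never lies in `jdIndex m`. -/
def jdToReal (σ : ℝ) : ∀ i, JDTy i → ℝ
  | Sum.inl _ => fun x : ℝ => σ * x
  | Sum.inr (Sum.inl _) => fun k : ℕ => k
  | Sum.inr (Sum.inr _) => fun y : ℝ => y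

lemma measurable_jdToReal (σ : ℝ) : ∀ i, Measurable (jdToReal σ i)
  | Sum.inl _ => measurable_const_mul σ
  | Sum.inr (Sum.inl _) => measurable_from_nat
  | Sum.inr (Sum.inr _) => measurable_id

def jdIndex (m : ℕ) : Finset (Unit ⊕ Unit ⊕ ℕ) :=
  insert (Sum.inl ()) ((Finset.range m).map (Function.Embedding.inr.trans Function.Embedding.inr))

def jumpDiffusionSum {Ω : Type*} (σ : ℝ) (W : Ω → ℝ) (Y : ℕ → Ω → ℝ) (m : ℕ) (ω : Ω) : ℝ :=
  σ * W ω + ∑ j ∈ Finset.range m, Y j ω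

lemma sum_jdIndex_jdToReal {Ω : Type*} (σ : ℝ) (W : Ω → ℝ) (N : Ω → ℕ) (Y : ℕ → Ω → ℝ) (m : ℕ)
    (ω : Ω) :
    ∑ i ∈ jdIndex m, jdToReal σ i (JDFam W N Y i ω) = jumpDiffusionSum σ W Y m ω := by
  rw [jdIndex, Finset.sum_insert (by simp), Finset.sum_map]
  rfl

section JumpDiffusion

variable {Ω : Type*} [MeasurableSpace Ω] {Q : Measure Ω} {W : Ω → ℝ} {N : Ω → ℕ}
  {Y : ℕ → Ω → ℝ}

lemma aemeasurable_JDFam (hW : AEMeasurable W Q) (hN : AEMeasurable N Q)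
    (hY : ∀ j, AEMeasurable (Y j) Q) : ∀ i, AEMeasurable (JDFam W N Y i) Q
  | Sum.inl _ => hW
  | Sum.inr (Sum.inl _) => hN
  | Sum.inr (Sum.inr j) => hY j

lemma indepFun_jumpDiffusionSum_jump
    (hIndep : iIndepFun (m := JDTy.instMeasurableSpace) (JDFam W N Y) Q)
    (hmeas : ∀ i, AEMeasurable (JDFam W N Y i) Q) (σ : ℝ) (m : ℕ) :
    IndepFun (jumpDiffusionSum σ W Y m) (Y m) Q := by
  have h := hIndep.indepFun_finsetSum_comp_of_notMem hmeas (measurable_jdToReal σ)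
    (S := jdIndex m)
      (k := Sum.inr (Sum.inr m)) (by simp [jdIndex])
  simp only [sum_jdIndex_jdToReal] at h
  exact h

lemma indepFun_count_jumpDiffusionSum
    (hIndep : iIndepFun (m := JDTy.instMeasurableSpace) (JDFam W N Y) Q)
    (hmeas : ∀ i, AEMeasurable (JDFam W N Y i) Q) (σ : ℝ) (m : ℕ) :
    IndepFun N (jumpDiffusionSum σ W Y m) Q := by
  have h := hIndep.indepFun_finsetSum_comp_of_notMem hmeas (measurable_jdToReal σ)
    (S := jdIndex m)
      (k := Sum.inr (Sum.inl ())) (by simp [jdIndex])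
  simp only [sum_jdIndex_jdToReal] at h
  exact h.symm

lemma map_jumpDiffusionSum {σ μ δ τ : ℝ} (hτ : 0 ≤ τ) (hW : Q.map W = gaussianReal 0 τ.toNNReal)
    (hY : ∀ j, Q.map (Y j) = gaussianReal μ (δ ^ 2).toNNReal)
    (hind : ∀ m, IndepFun (jumpDiffusionSum σ W Y m) (Y m) Q) (m : ℕ) :
    Q.map (jumpDiffusionSum σ W Y m) = gaussianReal (m * μ) (σ ^ 2 * τ + m * δ ^ 2).toNNReal := by
  induction m with
  | zero =>
    have hWlaw : HasLaw W (gaussianReal 0 τ.toNNReal) Q :=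
      ⟨.of_map_ne_zero (by rw [hW]; exact NeZero.ne _), hW⟩
    have h0 : jumpDiffusionSum σ W Y 0 = fun ω => σ * W ω := by
      funext ω
      simp [jumpDiffusionSum]
    rw [h0, (gaussianReal_const_mul hWlaw σ).map_eq]
    congr 1
    · simp
    · ext
      simp [Real.coe_toNNReal _ hτ]
      positivity
  | succ m ih =>
    have hsucc : jumpDiffusionSum σ W Y (m + 1) = jumpDiffusionSum σ W Y m + Y m := by
      funext ω
      simp [jumpDiffusionSum, Finset.sum_range_succ, add_assoc]
    rw [hsucc, gaussianReal_add_gaussianReal_of_indepFun (hind m) ih (hY m)]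
    congr 1
    · push_cast
      ring
    · ext
      simp only [NNReal.coe_add]
      rw [Real.coe_toNNReal _ (by positivity), Real.coe_toNNReal _ (by positivity),
        Real.coe_toNNReal _ (by positivity)]
      push_cast
      ring

theorem hasSum_integral_comp_jumpDiffusionSum [IsFiniteMeasure Q] {σ μ δ τ : ℝ} {r : ℝ≥0}
    (hτ : 0 ≤ τ) (hW : Q.map W = gaussianReal 0 τ.toNNReal) (hN : Q.map N = poissonMeasure r)
    (hY : ∀ j, Q.map (Y j) = gaussianReal μ (δ ^ 2).toNNReal)
    (hIndep : iIndepFun (m := JDTy.instMeasurableSpace) (JDFam W N Y) Q)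
    {φ : ℝ → ℝ} (hφ : Measurable φ) {C : ℝ} (hC : ∀ x, |φ x| ≤ C) :
    HasSum (fun m : ℕ => exp (-r) * r ^ m / m.factorial *
        ∫ x, φ x ∂gaussianReal (m * μ) (σ ^ 2 * τ + m * δ ^ 2).toNNReal)
      (∫ ω, φ (jumpDiffusionSum σ W Y (N ω) ω) ∂Q) := by
  have hWm : AEMeasurable W Q := .of_map_ne_zero (by rw [hW]; exact NeZero.ne _)
  have hNm : AEMeasurable N Q := .of_map_ne_zero (by rw [hN]; exact NeZero.ne _)
  have hYm : ∀ j, AEMeasurable (Y j) Q :=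
    fun j => .of_map_ne_zero (by rw [hY j]; exact NeZero.ne _)
  have hmeas := aemeasurable_JDFam hWm hNm hYm
  have hlaw := map_jumpDiffusionSum hτ hW hY (indepFun_jumpDiffusionSum_jump hIndep hmeas σ)
  have hS : ∀ m, AEMeasurable (jumpDiffusionSum σ W Y m) Q :=
    fun m => .of_map_ne_zero (by rw [hlaw m]; exact NeZero.ne _)
  have hF : ∀ m, AEStronglyMeasurable (fun ω => φ (jumpDiffusionSum σ W Y m ω)) Q :=
    fun m => (hφ.comp_aemeasurable (hS m)).aestronglyMeasurable
  have hint : Integrable (fun ω => φ (jumpDiffusionSum σ W Y (N ω) ω)) Q :=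
    .of_bound (aestronglyMeasurable_comp_index hNm hF) C (ae_of_all _ fun ω => hC _)
  have hind : ∀ m, IndepFun N (fun ω => φ (jumpDiffusionSum σ W Y m ω)) Q :=
    fun m => (indepFun_count_jumpDiffusionSum hIndep hmeas σ m).comp measurable_id hφ
  refine (hasSum_integral_comp_index hNm hF hind hint).congr_fun fun m => ?_
  rw [← map_measureReal_apply_of_aemeasurable hNm (measurableSet_singleton m), hN,
    poissonMeasure_real_singleton, ← integral_map (hS m) hφ.aestronglyMeasurable, hlaw m]

end JumpDiffusion

theorem stmt16_general
    {Ω : Type*} [MeasurableSpace Ω] (Q : Measure Ω) [IsProbabilityMeasure Q]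
    (γ μ σ δ lam tau : ℝ) (hσ : 0 < σ) (hlam : 0 < lam) (htau : 0 < tau)
    (W : Ω → ℝ) (N : Ω → ℕ) (Y : ℕ → Ω → ℝ)
    (hW : Measure.map W Q = gaussianReal 0 (tau).toNNReal)
    (hN : Measure.map N Q = poissonMeasure (lam * tau).toNNReal)
    (hY : ∀ j, Measure.map (Y j) Q = gaussianReal μ (δ ^ 2).toNNReal)
    (hIndep : iIndepFun (m := JDTy.instMeasurableSpace) (JDFam W N Y) Q)
    (X : Ω → ℝ) (hX : ∀ ω, X ω = γ * tau + σ * W ω + ∑ j ∈ Finset.range (N ω), Y j ω)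
    (c g : ℝ) (hc : 0 ≤ c) (n : ℕ)
    (Z : Ω → ℝ) (hZ : ∀ ω, Z ω = min c (Real.exp (X ω) - 1) - g / n)
    : ∫ ω, Z ω ∂Q
      = c - g / n + Real.exp (-(lam * tau)) * ∑' m : ℕ,
          (lam * tau) ^ m / (m.factorial : ℝ) *
            (Real.exp ((γ + σ ^ 2 / 2) * tau + (μ + δ ^ 2 / 2) * m) *
                stdNormCDF ((Real.log (1 + c) - γ * tau - m * μ - σ ^ 2 * tau - m * δ ^ 2) /
                  Real.sqrt (σ ^ 2 * tau + m * δ ^ 2))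
              - (1 + c) * stdNormCDF ((Real.log (1 + c) - γ * tau - m * μ) /
                  Real.sqrt (σ ^ 2 * tau + m * δ ^ 2))) := by
  have hr : ((lam * tau).toNNReal : ℝ) = lam * tau := Real.coe_toNNReal _ (by positivity)
  set φ : ℝ → ℝ := fun x => min c (exp (γ * tau + x) - 1) - g / n with hφ
  have hZφ : Z = fun ω => φ (jumpDiffusionSum σ W Y (N ω) ω) := by
    funext ω
    simp only [hZ, hX, hφ, jumpDiffusionSum, add_assoc]
  have hsum := hasSum_integral_comp_jumpDiffusionSum (σ := σ) (φ := φ) htau.le hW hN hY hIndep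
    (by fun_prop) (C := c + 1 + |g / n|)
    fun x => (abs_sub _ _).trans (by linarith [abs_min_exp_sub_one_le hc (γ * tau + x)])
  have hterm : ∀ m : ℕ, ∫ x, φ x ∂gaussianReal (m * μ) (σ ^ 2 * tau + m * δ ^ 2).toNNReal
      = c - g / n + (exp ((γ + σ ^ 2 / 2) * tau + (μ + δ ^ 2 / 2) * m) *
                stdNormCDF ((log (1 + c) - γ * tau - m * μ - σ ^ 2 * tau - m * δ ^ 2) /
                  √(σ ^ 2 * tau + m * δ ^ 2))
              - (1 + c) * stdNormCDF ((log (1 + c) - γ * tau - m * μ) /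
                  √(σ ^ 2 * tau + m * δ ^ 2))) := by
    intro m
    have hint : Integrable (fun x => min c (exp (γ * tau + x) - 1))
        (gaussianReal (m * μ) (σ ^ 2 * tau + m * δ ^ 2).toNNReal) :=
      .of_bound (by fun_prop) (c + 1) (ae_of_all _ fun x => abs_min_exp_sub_one_le hc _)
    rw [integral_sub hint (integrable_const _), integral_const, probReal_univ, one_smul,
      integral_min_exp_add_sub_one_gaussianReal (by linarith) _ _ (by positivity),
      sub_add_eq_sub_sub _ (σ ^ 2 * tau)]
    ring_nf
  have hpoisson := (hasSum_one_poissonMeasure (lam * tau).toNNReal).mul_right (c - g / n)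
  simp only [hterm, hr, one_mul] at hsum hpoisson
  rw [hZφ, ← tsum_mul_left, ((hsum.sub hpoisson).congr_fun fun m => by ring).tsum_eq]
  ring

/-- closed form of the first moment of `Z`. -/
theorem stmt16
    {Ω : Type*} [MeasurableSpace Ω] (Q : Measure Ω) [IsProbabilityMeasure Q]
    (γ μ σ δ lam tau : ℝ) (hσ : 0 < σ) (hδ : 0 < δ) (hlam : 0 < lam) (htau : 0 < tau)
    (W : Ω → ℝ) (N : Ω → ℕ) (Y : ℕ → Ω → ℝ)
    (hW : Measure.map W Q = gaussianReal 0 (tau).toNNReal)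
    (hN : Measure.map N Q = poissonMeasure (lam * tau).toNNReal)
    (hY : ∀ j, Measure.map (Y j) Q = gaussianReal μ (δ ^ 2).toNNReal)
    (hIndep : iIndepFun (m := JDTy.instMeasurableSpace) (JDFam W N Y) Q)
    (X : Ω → ℝ) (hX : ∀ ω, X ω = γ * tau + σ * W ω + ∑ j ∈ Finset.range (N ω), Y j ω)
    (c g : ℝ) (hc : 0 ≤ c) (n : ℕ) (hn : 1 ≤ n)
    (Z : Ω → ℝ) (hZ : ∀ ω, Z ω = min c (Real.exp (X ω) - 1) - g / n)
    : ∫ ω, Z ω ∂Q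
      = c - g / n + Real.exp (-(lam * tau)) * ∑' m : ℕ,
          (lam * tau) ^ m / (m.factorial : ℝ) *
            (Real.exp ((γ + σ ^ 2 / 2) * tau + (μ + δ ^ 2 / 2) * m) *
                stdNormCDF ((Real.log (1 + c) - γ * tau - m * μ - σ ^ 2 * tau - m * δ ^ 2) /
                  Real.sqrt (σ ^ 2 * tau + m * δ ^ 2))
              - (1 + c) * stdNormCDF ((Real.log (1 + c) - γ * tau - m * μ) /
                  Real.sqrt (σ ^ 2 * tau + m * δ ^ 2))) :=
  stmt16_general Q γ μ σ δ lam tau hσ hlam htau W N Y hW hN hY hIndep X hX c g hc n Z hZ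
end
end
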